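/- arXiv:2107.01838 — 3 statements merged into one kernel-verified Lean document; each statement's English description precedes it below -/
import Mathlib

section
/- Let K/F be a quadratic extension of number fields. Let r_{K/F,ℝ} denote the number of real places of F all of whose extensions to K are real, and let s_F denote the number of complex places of F. Then the quotient group 𝒪_K^× / ι(𝒪_F^×) (the unit group of the ring of integers of K modulo the image of the unit group of the ring of integers of F) is a finitely generated abelian group whose free rank equals r_{K/F,ℝ} + s_F. -/
open NumberField TensorProduct

set_option maxSynthPendingDepth 2

/-!
Since `ι` is injective, ranks are additive along `1 → 𝒪_F^× → 𝒪_K^× → 𝒪_K^× / ι(𝒪_F^×) → 1`,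
so by Dirichlet's unit theorem the quotient has rank `(#places K - 1) - (#places F - 1)`.
A quadratic extension of number fields is Galois, so above each place of `F` lie two places of
`K` if it is unramified and one otherwise; hence `#places K = #places F + #unramified places`.
The unramified places of `F` are the complex ones and the real ones with only real places above.
-/

open Module NumberField.InfinitePlace

lemma MonoidHom.finrank_quotient_range_add_finrank {A B : Type*} [CommGroup A] [CommGroup B]
    [Module.Finite ℤ (Additive B)] (φ : A →* B) (hφ : Function.Injective φ) :
    finrank ℤ (Additive (B ⧸ φ.range)) + finrank ℤ (Additive A) = finrank ℤ (Additive B) := by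
  let f := φ.toAdditive.toIntLinearMap
  let g := (QuotientGroup.mk' φ.range).toAdditive.toIntLinearMap
  have hker : LinearMap.ker g = LinearMap.range f := by
    ext x
    exact QuotientGroup.eq_one_iff (N := φ.range) x.toMul
  have hg : Function.Surjective g := QuotientGroup.mk'_surjective φ.range
  rw [← (g.quotKerEquivOfSurjective hg).finrank_eq, ← LinearMap.finrank_range_of_inj (f := f) hφ,
    hker, Submodule.finrank_quotient_add_finrank]

namespace NumberField.InfinitePlace

variable {F : Type*} (K : Type*) [Field F] [Field K] [Algebra F K]

lemma isUnramifiedIn_iff {v : InfinitePlace F} :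
    v.IsUnramifiedIn K ↔
      (v.IsReal ∧ ∀ w : InfinitePlace K, w.comap (algebraMap F K) = v → w.IsReal) ∨
        v.IsComplex := by
  refine ⟨fun h ↦ ?_, ?_⟩
  · refine (isReal_or_isComplex v).imp (fun hv ↦ ⟨hv, fun w hw ↦ ?_⟩) id
    exact (isUnramified_iff.mp (h w hw)).resolve_right (hw ▸ not_isComplex_iff_isReal.mpr hv)
  · rintro (⟨-, hreal⟩ | hv) w hw
    · exact isUnramified_iff.mpr (.inl (hreal w hw))
    · exact isUnramified_iff.mpr (.inr (hw ▸ hv))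

lemma card_isUnramifiedIn [NumberField F] :
    Nat.card {v : InfinitePlace F // v.IsUnramifiedIn K} =
      Nat.card {v : InfinitePlace F // v.IsReal ∧
          ∀ w : InfinitePlace K, w.comap (algebraMap F K) = v → w.IsReal} +
        Nat.card {v : InfinitePlace F // v.IsComplex} := by
  classical
  have hdisj : Disjoint (fun v : InfinitePlace F ↦ v.IsReal ∧
      ∀ w : InfinitePlace K, w.comap (algebraMap F K) = v → w.IsReal) IsComplex :=
    fun p hpr hpc v hv ↦ not_isReal_iff_isComplex.mpr (hpc v hv) (hpr v hv).1
  rw [Nat.card_congr (Equiv.subtypeEquivRight fun v ↦ isUnramifiedIn_iff K),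
    Nat.card_congr (subtypeOrEquiv _ _ hdisj), Nat.card_sum]

variable (F) in
lemma card_eq_card_add_card_isUnramifiedIn [NumberField F] [NumberField K]
    [Algebra.IsQuadraticExtension F K] :
    Fintype.card (InfinitePlace K) =
      Fintype.card (InfinitePlace F) + Nat.card {v : InfinitePlace F // v.IsUnramifiedIn K} := by
  classical
  rw [card_eq_card_isUnramifiedIn F K, Algebra.IsQuadraticExtension.finrank_eq_two,
    Nat.card_eq_fintype_card, Fintype.card_subtype,
    ← Finset.card_add_card_compl {v : InfinitePlace F | v.IsUnramifiedIn K}]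
  ring

end NumberField.InfinitePlace

/-- For a quadratic extension `K/F` of number fields, the quotient
`𝒪_K^× / ι(𝒪_F^×)` is a finitely generated abelian group whose free rank
(the dimension of its rationalization) is `r_{K/F,ℝ} + s_F`, where `r_{K/F,ℝ}` is the
number of real places of `F` all of whose extensions to `K` are real and `s_F` is the
number of complex places of `F`. -/
theorem relative_unit_group_rank (F K : Type) [Field F] [NumberField F] [Field K]
    [NumberField K] [Algebra F K] (hquad : Module.finrank F K = 2) :
    Group.FG ((𝓞 K)ˣ ⧸ (Units.map (algebraMap (𝓞 F) (𝓞 K)).toMonoidHom).range) ∧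
    Module.finrank ℚ
        (ℚ ⊗[ℤ]
          Additive ((𝓞 K)ˣ ⧸ (Units.map (algebraMap (𝓞 F) (𝓞 K)).toMonoidHom).range)) =
      Nat.card {v : InfinitePlace F // v.IsReal ∧
          ∀ w : InfinitePlace K, w.comap (algebraMap F K) = v → w.IsReal} +
        Nat.card {v : InfinitePlace F // v.IsComplex} := by
  have : Algebra.IsQuadraticExtension F K := ⟨hquad⟩
  have : Group.FG (𝓞 K)ˣ := Group.fg_iff_monoid_fg.mpr inferInstance
  refine ⟨inferInstance, ?_⟩
  have hrank := MonoidHom.finrank_quotient_range_add_finrank _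
    (Units.map_injective (FaithfulSMul.algebraMap_injective (𝓞 F) (𝓞 K)))
  rw [Units.finrank_eq, Units.finrank_eq, Units.rank, Units.rank,
    card_eq_card_add_card_isUnramifiedIn F K, card_isUnramifiedIn] at hrank
  rw [(TensorProduct.isBaseChange ℤ _ ℚ).finrank_eq]
  have := Fintype.card_pos (α := InfinitePlace F)
  omega
end

section
/- Let u be a natural number, C a compact Hausdorff abelian topological group, and Γ a discrete subgroup of the topological group ℝ^u × C (with the product topology). Let π : ℝ^u × C → ℝ^u be the projection. Then: (a) Γ ∩ ker π is a finite group; (b) π(Γ) is a discrete subgroup of ℝ^u; (c) Γ is isomorphic as a group to (Γ ∩ ker π) × π(Γ). -/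
/-!
A discrete subgroup `Γ` of a Hausdorff group is closed, so it meets every compact set in a finite
set. Since `C` is compact, the projection `π : ℝ^u × C → ℝ^u` is proper; hence `Γ ∩ ker π` and
every `π(Γ) ∩ K`, `K` compact, are finite, so `π(Γ)` is discrete. A discrete subgroup of `ℝ^u` is
a free `ℤ`-module, so `Γ → π(Γ)` splits and `Γ ≅ (Γ ∩ ker π) × π(Γ)`.
-/

open Set Filter

namespace AddSubgroup

section Topological

variable {G H : Type*} [AddGroup G] [TopologicalSpace G] [IsTopologicalAddGroup G] [T2Space G]
  [AddGroup H] [TopologicalSpace H]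

theorem finite_inter_of_isCompact (Γ : AddSubgroup G) [DiscreteTopology Γ] {K : Set G}
    (hK : IsCompact K) : ((Γ : Set G) ∩ K).Finite :=
  (hK.inter_left Γ.isClosed_of_discrete).finite
    ((isDiscrete_iff_discreteTopology.mpr ‹_›).mono inter_subset_left)

theorem finite_inf_ker_of_isProperMap (Γ : AddSubgroup G) [DiscreteTopology Γ] {f : G →+ H}
    (hf : IsProperMap f) : Finite ↥(Γ ⊓ f.ker) := by
  have := Γ.finite_inter_of_isCompact (hf.isCompact_preimage (isCompact_singleton (x := 0)))
  rw [← AddMonoidHom.coe_ker, ← coe_inf] at this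
  exact this.to_subtype

theorem discreteTopology_map_of_isProperMap [T1Space H] [WeaklyLocallyCompactSpace H]
    (Γ : AddSubgroup G) [DiscreteTopology Γ] {f : G →+ H} (hf : IsProperMap f) :
    DiscreteTopology ↥(Γ.map f) := by
  refine continuous_subtype_val.discrete_of_tendsto_cofinite_cocompact
    (tendsto_cofinite_cocompact_iff.mpr fun K hK ↦ ?_)
  have hfin : ((Γ.map f : Set H) ∩ K).Finite := by
    rw [coe_map, ← image_inter_preimage]
    exact (Γ.finite_inter_of_isCompact (hf.isCompact_preimage hK)).image f
  exact (hfin.preimage Subtype.val_injective.injOn).subset fun x hx ↦ ⟨x.2, hx⟩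

end Topological

instance moduleFree_of_discreteTopology {E : Type*} [NormedAddCommGroup E] [NormedSpace ℝ E]
    [FiniteDimensional ℝ E] (P : AddSubgroup E) [DiscreteTopology P] : Module.Free ℤ P :=
  have : DiscreteTopology P.toIntSubmodule := ‹DiscreteTopology P›
  instModuleFree_of_discrete_submodule P.toIntSubmodule

theorem nonempty_addEquiv_inf_ker_prod_map {G H : Type*} [AddCommGroup G] [AddCommGroup H]
    (Γ : AddSubgroup G) (f : G →+ H) [Module.Projective ℤ (Γ.map f)] :
    Nonempty (Γ ≃+ ↥(Γ ⊓ f.ker) × ↥(Γ.map f)) := by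
  let i : ↥(Γ ⊓ f.ker) →ₗ[ℤ] Γ := (inclusion inf_le_left).toIntLinearMap
  let p : Γ →ₗ[ℤ] Γ.map f := (f.addSubgroupMap Γ).toIntLinearMap
  have hexact : Function.Exact i p := by
    refine fun x ↦ ⟨fun hx ↦ ⟨⟨x, x.2, ?_⟩, rfl⟩, ?_⟩
    · exact congrArg Subtype.val hx
    · rintro ⟨k, rfl⟩
      exact Subtype.ext (mem_inf.mp k.2).2
  obtain ⟨s, hs⟩ :=
    Module.projective_lifting_property p LinearMap.id (f.addSubgroupMap_surjective Γ)
  exact ⟨(hexact.splitSurjectiveEquiv (inclusion_injective inf_le_left) ⟨s, hs⟩).1.toAddEquiv⟩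

end AddSubgroup

/-- Let `C` be a compact Hausdorff abelian topological group and `Γ` a
discrete subgroup of `ℝ^u × C`.  With `π` the projection onto `ℝ^u`:
(a) `Γ ∩ ker π` is finite, (b) `π(Γ)` is a discrete subgroup of `ℝ^u`, and
(c) `Γ ≃ (Γ ∩ ker π) × π(Γ)` as groups. -/
theorem discrete_subgroup_of_euclidean_times_compact (u : ℕ) (C : Type)
    [AddCommGroup C] [TopologicalSpace C] [IsTopologicalAddGroup C] [CompactSpace C]
    [T2Space C] (Γ : AddSubgroup ((Fin u → ℝ) × C)) [DiscreteTopology ↥Γ] :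
    Finite ↥(Γ ⊓ (AddMonoidHom.fst (Fin u → ℝ) C).ker) ∧
    DiscreteTopology ↥(Γ.map (AddMonoidHom.fst (Fin u → ℝ) C)) ∧
    Nonempty (↥Γ ≃+
      ↥(Γ ⊓ (AddMonoidHom.fst (Fin u → ℝ) C).ker) ×
        ↥(Γ.map (AddMonoidHom.fst (Fin u → ℝ) C))) := by
  have hπ : IsProperMap (AddMonoidHom.fst (Fin u → ℝ) C) := isProperMap_fst_of_compactSpace
  have hdisc := Γ.discreteTopology_map_of_isProperMap hπ
  exact ⟨Γ.finite_inf_ker_of_isProperMap hπ, hdisc, Γ.nonempty_addEquiv_inf_ker_prod_map _⟩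
end

section
/- Let Γ be a group acting on a set Z, H ≤ Γ a subgroup, and D ⊆ Z a subset with h·D = D for all h ∈ H. Assume that for every z ∈ Z there exists a left coset γH ∈ Γ/H, unique as a coset, such that γ^{-1}·z ∈ D. Let R be a commutative ring. Define the induced module Ind_H^Γ Map(D,R) as the set of functions Φ : Γ → Map(D,R) such that Φ(γh)(d) = Φ(γ)(h·d) for all γ ∈ Γ, h ∈ H, d ∈ D, and such that Φ is supported on finitely many left cosets of H; Γ acts by (γ′·Φ)(γ) = Φ(γ′^{-1}γ). Let M be the set of functions f : Z → R that vanish identically on all but finitely many of the sets γ·D (γH ∈ Γ/H), with Γ acting by (γ·f)(z) = f(γ^{-1}·z). Then the map sending Φ to the function z ↦ Φ(γ_z)(γ_z^{-1}·z), where γ_z H is the unique coset with γ_z^{-1}·z ∈ D, is well defined (independent of the choice of representative γ_z) and is a Γ-equivariant isomorphism of R-modules Ind_H^Γ Map(D,R) ≅ M. -/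
open Pointwise

/-- Membership in the induced module `Ind_H^Γ Map(D, R)`: functions `Φ : Γ → (D → R)`
satisfying the compatibility `Φ(γh)(d) = Φ(γ)(h·d)` for `h ∈ H` and supported on finitely
many left cosets of `H`. -/
def IndCond (Γ Z R : Type) [Group Γ] [MulAction Γ Z] (H : Subgroup Γ) (D : Set Z)
    [CommRing R] (Φ : Γ → D → R) : Prop :=
  (∀ (γ : Γ), ∀ h ∈ H, ∀ (d : D) (hd : h • (d : Z) ∈ D),
      Φ (γ * h) d = Φ γ ⟨h • (d : Z), hd⟩) ∧
  Set.Finite ((QuotientGroup.mk (s := H)) '' {γ : Γ | Φ γ ≠ 0})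

/-- The induced module `Ind_H^Γ Map(D, R)` as a submodule of `Γ → (D → R)`. -/
def indModule (Γ Z R : Type) [Group Γ] [MulAction Γ Z] (H : Subgroup Γ) (D : Set Z)
    [CommRing R] : Submodule R (Γ → D → R) where
  carrier := {Φ | IndCond Γ Z R H D Φ}
  zero_mem' := by
    refine ⟨fun γ h hh d hd => rfl, ?_⟩
    have h0 : {γ : Γ | (0 : Γ → D → R) γ ≠ 0} = ∅ := by simp
    rw [h0, Set.image_empty]
    exact Set.finite_empty
  add_mem' := by
    rintro Φ Ψ ⟨hΦ1, hΦ2⟩ ⟨hΨ1, hΨ2⟩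
    refine ⟨fun γ h hh d hd => by simp [hΦ1 γ h hh d hd, hΨ1 γ h hh d hd], ?_⟩
    refine Set.Finite.subset (hΦ2.union hΨ2) ?_
    rw [← Set.image_union]
    refine Set.image_mono ?_
    intro γ hγ
    have : Φ γ ≠ 0 ∨ Ψ γ ≠ 0 := by
      by_contra hc
      push_neg at hc
      exact hγ (by simp [Pi.add_apply, hc.1, hc.2])
    simpa [Set.mem_union, Set.mem_setOf_eq] using this
  smul_mem' := by
    rintro r Φ ⟨hΦ1, hΦ2⟩
    refine ⟨fun γ h hh d hd => by simp [hΦ1 γ h hh d hd], ?_⟩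
    refine Set.Finite.subset hΦ2 (Set.image_mono ?_)
    intro γ hγ
    have : Φ γ ≠ 0 := by
      intro h0
      exact hγ (by simp [h0])
    simpa [Set.mem_setOf_eq] using this

/-- Membership in the module `M` of functions `f : Z → R` vanishing identically on all but
finitely many of the translates `γ·D` (`γH ∈ Γ/H`). -/
def MCond (Γ Z R : Type) [Group Γ] [MulAction Γ Z] (H : Subgroup Γ) (D : Set Z)
    [CommRing R] (f : Z → R) : Prop :=
  Set.Finite ((QuotientGroup.mk (s := H)) '' {γ : Γ | ∃ z ∈ γ • D, f z ≠ 0})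

/-- The module `M` of functions `Z → R` vanishing on all but finitely many translates of
`D` as a submodule of `Z → R`. -/
def transModule (Γ Z R : Type) [Group Γ] [MulAction Γ Z] (H : Subgroup Γ) (D : Set Z)
    [CommRing R] : Submodule R (Z → R) where
  carrier := {f | MCond Γ Z R H D f}
  zero_mem' := by
    show Set.Finite _
    have h0 : {γ : Γ | ∃ z ∈ γ • D, (0 : Z → R) z ≠ 0} = ∅ := by simp
    rw [h0, Set.image_empty]
    exact Set.finite_empty
  add_mem' := by
    intro f g hf hg
    refine Set.Finite.subset (Set.Finite.union hf hg) ?_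
    rw [← Set.image_union]
    refine Set.image_mono ?_
    rintro γ ⟨z, hz, hne⟩
    have : (∃ z ∈ γ • D, f z ≠ 0) ∨ ∃ z ∈ γ • D, g z ≠ 0 := by
      by_contra hc
      push_neg at hc
      exact hne (by simp [Pi.add_apply, hc.1 z hz, hc.2 z hz])
    simpa [Set.mem_union, Set.mem_setOf_eq] using this
  smul_mem' := by
    intro r f hf
    refine Set.Finite.subset hf (Set.image_mono ?_)
    rintro γ ⟨z, hz, hne⟩
    refine ⟨z, hz, fun h0 => hne (by simp [h0])⟩

/-!
Since the cosets `γH` with `γ⁻¹ • z ∈ D` are unique, the compatibility `Φ(γh)(d) = Φ(γ)(h·d)`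
makes `Φ(γ)(γ⁻¹·z)` independent of the representative `γ`. The inverse map restricts
`f : Z → R` to the translates, `γ ↦ (d ↦ f(γ·d))`; under both maps `Φ(γ) ≠ 0` exactly when
`f` does not vanish on `γ·D`, so finiteness of the support on cosets is preserved.
-/

section InducedModule

variable {Γ Z R : Type} [Group Γ] [MulAction Γ Z] {H : Subgroup Γ} {D : Set Z}

variable (H D) in
abbrev TileCosetUnique : Prop :=
  ∀ (z : Z) (γ γ' : Γ), γ⁻¹ • z ∈ D → γ'⁻¹ • z ∈ D → γ⁻¹ * γ' ∈ H

noncomputable def evalInd (hex : ∀ z : Z, ∃ γ : Γ, γ⁻¹ • z ∈ D) (Φ : Γ → D → R) : Z → R :=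
  fun z => Φ (hex z).choose ⟨(hex z).choose⁻¹ • z, (hex z).choose_spec⟩

def restrictTranslates (f : Z → R) : Γ → D → R :=
  fun γ d => f (γ • (d : Z))

lemma IndCond.apply_inv_smul_eq [CommRing R] (huniq : TileCosetUnique H D)
    {Φ : Γ → D → R} (hΦ : IndCond Γ Z R H D Φ) {z : Z} {γ γ' : Γ}
    (hγ : γ⁻¹ • z ∈ D) (hγ' : γ'⁻¹ • z ∈ D) :
    Φ γ ⟨γ⁻¹ • z, hγ⟩ = Φ γ' ⟨γ'⁻¹ • z, hγ'⟩ := by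
  have hsmul : (γ'⁻¹ * γ) • (γ⁻¹ • z) = γ'⁻¹ • z := by
    rw [smul_smul, mul_assoc, mul_inv_cancel, mul_one]
  have hcompat := hΦ.1 γ' (γ'⁻¹ * γ) (huniq z γ' γ hγ' hγ) ⟨γ⁻¹ • z, hγ⟩ (hsmul ▸ hγ')
  rw [mul_inv_cancel_left] at hcompat
  exact hcompat.trans (congrArg (Φ γ') (Subtype.ext hsmul))

variable (hex : ∀ z : Z, ∃ γ : Γ, γ⁻¹ • z ∈ D)

lemma evalInd_eq [CommRing R] (huniq : TileCosetUnique H D)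
    {Φ : Γ → D → R} (hΦ : Φ ∈ indModule Γ Z R H D) {γ : Γ} {z : Z}
    (hz : γ⁻¹ • z ∈ D) : evalInd hex Φ z = Φ γ ⟨γ⁻¹ • z, hz⟩ :=
  IndCond.apply_inv_smul_eq huniq hΦ _ hz

lemma evalInd_mem [CommRing R] (huniq : TileCosetUnique H D)
    {Φ : Γ → D → R} (hΦ : Φ ∈ indModule Γ Z R H D) :
    evalInd hex Φ ∈ transModule Γ Z R H D := by
  refine hΦ.2.subset (Set.image_mono ?_)
  rintro γ ⟨_, ⟨d, hd, rfl⟩, hne⟩ hΦγ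
  have hγd : γ⁻¹ • γ • d ∈ D := by rwa [inv_smul_smul]
  rw [evalInd_eq hex huniq hΦ hγd, hΦγ] at hne
  exact hne rfl

lemma restrictTranslates_evalInd [CommRing R] (huniq : TileCosetUnique H D)
    {Φ : Γ → D → R} (hΦ : Φ ∈ indModule Γ Z R H D) :
    restrictTranslates (evalInd hex Φ) = Φ := by
  funext γ d
  have hγd : γ⁻¹ • γ • (d : Z) ∈ D := by rw [inv_smul_smul]; exact d.2
  rw [restrictTranslates, evalInd_eq hex huniq hΦ hγd]
  exact congrArg (Φ γ) (Subtype.ext (inv_smul_smul γ (d : Z)))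

lemma evalInd_restrictTranslates (f : Z → R) :
    evalInd hex (restrictTranslates (Γ := Γ) (D := D) f) = f :=
  funext fun z => congrArg f (smul_inv_smul _ z)

lemma restrictTranslates_mem [CommRing R] {f : Z → R} (hf : f ∈ transModule Γ Z R H D) :
    restrictTranslates f ∈ indModule Γ Z R H D := by
  refine ⟨fun γ h _ d _ => congrArg f (mul_smul γ h (d : Z)), hf.subset (Set.image_mono ?_)⟩
  intro γ hγ
  obtain ⟨d, hd⟩ : ∃ d : D, f (γ • (d : Z)) ≠ 0 := by
    by_contra! hzero
    exact hγ (funext hzero)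
  exact ⟨γ • (d : Z), Set.smul_mem_smul_set d.2, hd⟩

noncomputable def indEquivTransModule [CommRing R] (huniq : TileCosetUnique H D) :
    indModule Γ Z R H D ≃ₗ[R] transModule Γ Z R H D where
  toFun Φ := ⟨evalInd hex Φ, evalInd_mem hex huniq Φ.2⟩
  invFun f := ⟨restrictTranslates f, restrictTranslates_mem f.2⟩
  map_add' _ _ := rfl
  map_smul' _ _ := rfl
  left_inv Φ := Subtype.ext (restrictTranslates_evalInd hex huniq Φ.2)
  right_inv f := Subtype.ext (evalInd_restrictTranslates hex (f : Z → R))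

lemma coe_indEquivTransModule_apply [CommRing R] (huniq : TileCosetUnique H D)
    (Φ : indModule Γ Z R H D) :
    (indEquivTransModule hex huniq Φ : Z → R) = evalInd hex Φ :=
  rfl

end InducedModule

theorem induced_module_iso_general (Γ Z R : Type) [Group Γ] [MulAction Γ Z] (H : Subgroup Γ)
    (D : Set Z) [CommRing R]
    (hex : ∀ z : Z, ∃ γ : Γ, γ⁻¹ • z ∈ D)
    (huniq : ∀ (z : Z) (γ γ' : Γ), γ⁻¹ • z ∈ D → γ'⁻¹ • z ∈ D → γ⁻¹ * γ' ∈ H) :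
    ∃ e : indModule Γ Z R H D ≃ₗ[R] transModule Γ Z R H D,
      (∀ (Φ : indModule Γ Z R H D) (γ : Γ) (z : Z) (hz : γ⁻¹ • z ∈ D),
        (e Φ : Z → R) z = (Φ : Γ → D → R) γ ⟨γ⁻¹ • z, hz⟩) ∧
      (∀ (γ' : Γ) (Φ : indModule Γ Z R H D)
          (hmem : (fun γ => (Φ : Γ → D → R) (γ'⁻¹ * γ)) ∈ indModule Γ Z R H D) (z : Z),
        (e ⟨fun γ => (Φ : Γ → D → R) (γ'⁻¹ * γ), hmem⟩ : Z → R) z =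
          (e Φ : Z → R) (γ'⁻¹ • z)) := by
  refine ⟨indEquivTransModule hex huniq, fun Φ γ z hz => evalInd_eq hex huniq Φ.2 hz, ?_⟩
  intro γ' Φ hmem z
  obtain ⟨γ, hγ⟩ := hex (γ'⁻¹ • z)
  have hz : (γ' * γ)⁻¹ • z ∈ D := by rwa [mul_inv_rev, mul_smul]
  simp only [coe_indEquivTransModule_apply]
  rw [evalInd_eq hex huniq hmem hz, evalInd_eq hex huniq Φ.2 hγ]
  simp only [inv_mul_cancel_left, mul_inv_rev, mul_smul]

/-- (Abstract form of Lemma 3.3.)  If `Γ` acts on `Z`, `D ⊆ Z` is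
`H`-stable, and the translates `γ·D` tile `Z` with uniquely determined coset `γH`, then
evaluation `Φ ↦ (z ↦ Φ(γ_z)(γ_z⁻¹·z))` is a well-defined `Γ`-equivariant isomorphism of
`R`-modules `Ind_H^Γ Map(D,R) ≅ M`. -/
theorem induced_module_iso (Γ Z R : Type) [Group Γ] [MulAction Γ Z] (H : Subgroup Γ)
    (D : Set Z) [CommRing R]
    (hD : ∀ h ∈ H, h • D = D)
    (hex : ∀ z : Z, ∃ γ : Γ, γ⁻¹ • z ∈ D)
    (huniq : ∀ (z : Z) (γ γ' : Γ), γ⁻¹ • z ∈ D → γ'⁻¹ • z ∈ D → γ⁻¹ * γ' ∈ H) :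
    ∃ e : indModule Γ Z R H D ≃ₗ[R] transModule Γ Z R H D,
      (∀ (Φ : indModule Γ Z R H D) (γ : Γ) (z : Z) (hz : γ⁻¹ • z ∈ D),
        (e Φ : Z → R) z = (Φ : Γ → D → R) γ ⟨γ⁻¹ • z, hz⟩) ∧
      (∀ (γ' : Γ) (Φ : indModule Γ Z R H D)
          (hmem : (fun γ => (Φ : Γ → D → R) (γ'⁻¹ * γ)) ∈ indModule Γ Z R H D) (z : Z),
        (e ⟨fun γ => (Φ : Γ → D → R) (γ'⁻¹ * γ), hmem⟩ : Z → R) z =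
          (e Φ : Z → R) (γ'⁻¹ • z)) :=
  induced_module_iso_general Γ Z R H D hex huniq
end
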